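/- Let A be a complex Banach algebra and a ∈ A. If there exists an idempotent p with pa = ap and a^n − p ∈ √J(A) for some n ∈ ℕ, then a has a generalized Zhou inverse (in particular, p automatically lies in comm²(a)). -/

import Mathlib

/-- x lies in the Jacobson radical: 1 - y*x is a unit for every y. -/
def inRadJ {R : Type*} [Ring R] (x : R) : Prop := ∀ y : R, IsUnit (1 - y * x)

/-- x ∈ √J(R): some power of x lies in the Jacobson radical. -/
def inSqrtJ {R : Type*} [Ring R] (x : R) : Prop := ∃ m : ℕ, 0 < m ∧ inRadJ (x ^ m)

/-- x belongs to the double commutant of a. -/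
def inComm2 {R : Type*} [Ring R] (a x : R) : Prop :=
  ∀ y : R, y * a = a * y → x * y = y * x

/-- b is a generalized Zhou inverse of a. -/
def IsGZhouInv {R : Type*} [Ring R] (a b : R) : Prop :=
  b * a * b = b ∧ inComm2 a b ∧ ∃ n : ℕ, 0 < n ∧ inSqrtJ (a ^ n - a * b)

/-- b is a Zhou inverse of a. -/
def IsZhouInv {R : Type*} [Ring R] (a b : R) : Prop :=
  b * a * b = b ∧ inComm2 a b ∧ ∃ n : ℕ, 0 < n ∧ IsNilpotent (a ^ n - a * b)

open Filter Finset
open scoped ENNReal NNReal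

section Aux

set_option linter.unusedSectionVars false

lemma swap_unit {R : Type*} [Ring R] {a b : R} (h : IsUnit (1 - a * b)) :
    IsUnit (1 - b * a) := by
  obtain ⟨u', h1, h2⟩ := isUnit_iff_exists.mp h
  have k1 : a * b * u' = u' - 1 := by
    have : u' - a * b * u' = 1 := by rw [← h1]; noncomm_ring
    rw [← this]; noncomm_ring
  have k2 : u' * (a * b) = u' - 1 := by
    have : u' - u' * (a * b) = 1 := by rw [← h2]; noncomm_ring
    rw [← this]; noncomm_ring
  refine isUnit_iff_exists.mpr ⟨1 + b * u' * a, ?_, ?_⟩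
  · calc (1 - b * a) * (1 + b * u' * a)
        = 1 + b * u' * a - b * a - b * (a * b * u') * a := by noncomm_ring
      _ = 1 + b * u' * a - b * a - b * (u' - 1) * a := by rw [k1]
      _ = 1 := by noncomm_ring
  · calc (1 + b * u' * a) * (1 - b * a)
        = 1 + b * u' * a - b * a - b * (u' * (a * b)) * a := by noncomm_ring
      _ = 1 + b * u' * a - b * a - b * (u' - 1) * a := by rw [k2]
      _ = 1 := by noncomm_ring

lemma idem_pow {R : Type*} [Monoid R] {p : R} (hp : p * p = p) :
    ∀ m : ℕ, 0 < m → p ^ m = p := by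
  intro m hm
  induction m with
  | zero => omega
  | succ k ih =>
      rcases Nat.eq_zero_or_pos k with hk | hk
      · subst hk; rw [pow_one]
      · rw [pow_succ, ih hk, hp]

variable {A : Type*} [NormedRing A] [NormedAlgebra ℂ A] [CompleteSpace A]

lemma spec_sub_zero [Nontrivial A] {x : A} {m : ℕ} (hm : 0 < m) (hx : inRadJ (x ^ m)) :
    spectrum ℂ x ⊆ {0} := by
  intro lam hlam
  by_contra hne
  have hne : lam ≠ 0 := by simpa using hne
  have hmem : lam ^ m ∈ spectrum ℂ (x ^ m) := by
    rw [spectrum.map_pow]; exact ⟨lam, hlam, rfl⟩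
  have hcne : (lam ^ m : ℂ) ≠ 0 := pow_ne_zero _ hne
  have hu : IsUnit (algebraMap ℂ A (lam ^ m) - x ^ m) := by
    have h1 : IsUnit (1 - ((lam ^ m)⁻¹ • (1 : A)) * x ^ m) := hx _
    have h2 : IsUnit (algebraMap ℂ A (lam ^ m)) :=
      (isUnit_iff_ne_zero.mpr hcne).map (algebraMap ℂ A)
    have h3 := h2.mul h1
    have heq : algebraMap ℂ A (lam ^ m) * (1 - ((lam ^ m)⁻¹ • (1 : A)) * x ^ m)
        = algebraMap ℂ A (lam ^ m) - x ^ m := by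
      rw [mul_sub, mul_one, Algebra.algebraMap_eq_smul_one, smul_mul_assoc, smul_mul_assoc,
        one_mul, one_mul, smul_smul, mul_inv_cancel₀ hcne, one_smul]
    rwa [heq] at h3
  exact (spectrum.notMem_iff.mpr hu) hmem

lemma rad_zero {x : A} (hσ : spectrum ℂ x ⊆ {0}) : spectralRadius ℂ x = 0 := by
  refine le_antisymm ?_ zero_le
  refine iSup₂_le fun k hk => ?_
  have : k = 0 := hσ hk
  simp [this]

lemma norm_pow_bound {x : A} (hσ : spectrum ℂ x ⊆ {0}) {ε : ℝ} (hε : 0 < ε) :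
    ∃ M : ℝ, 0 < M ∧ ∀ j : ℕ, ‖x ^ j‖ ≤ M * ε ^ j := by
  have hG := spectrum.pow_nnnorm_pow_one_div_tendsto_nhds_spectralRadius x
  rw [rad_zero hσ] at hG
  have hev : ∀ᶠ n : ℕ in atTop, (‖x ^ n‖₊ : ℝ≥0∞) ^ (1 / n : ℝ) < ENNReal.ofReal ε := by
    refine hG.eventually_lt_const ?_
    simpa using hε
  obtain ⟨N, hN⟩ := eventually_atTop.mp hev
  set K := max N 1 with hK
  have hbig : ∀ j : ℕ, K ≤ j → ‖x ^ j‖ ≤ ε ^ j := by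
    intro j hj
    have hj1 : 1 ≤ j := le_trans (le_max_right N 1) hj
    have hjN : N ≤ j := le_trans (le_max_left N 1) hj
    have h1 := (hN j hjN).le
    have hj0 : (j : ℝ) ≠ 0 := by positivity
    have h2 : ((‖x ^ j‖₊ : ℝ≥0∞) ^ (1 / j : ℝ)) ^ (j : ℝ) ≤ (ENNReal.ofReal ε) ^ (j : ℝ) :=
      ENNReal.rpow_le_rpow h1 (by positivity)
    rw [← ENNReal.rpow_mul, one_div, inv_mul_cancel₀ hj0, ENNReal.rpow_one] at h2
    have h3' : ENNReal.ofReal (ε ^ j) = (ENNReal.ofReal ε) ^ (j : ℝ) := by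
      rw [ENNReal.ofReal_pow hε.le, ← ENNReal.rpow_natCast]
    have h3 : (‖x ^ j‖₊ : ℝ≥0∞) ≤ ENNReal.ofReal (ε ^ j) := by
      rw [h3']
      exact h2
    have h4 := ENNReal.toReal_mono (by simp) h3
    rwa [ENNReal.coe_toReal, coe_nnnorm, ENNReal.toReal_ofReal (by positivity)] at h4
  refine ⟨1 + ∑ j ∈ Finset.range K, ‖x ^ j‖ / ε ^ j, by positivity, fun j => ?_⟩
  rcases le_or_gt K j with hj | hj
  · have h1 : (1 : ℝ) ≤ 1 + ∑ j ∈ Finset.range K, ‖x ^ j‖ / ε ^ j := by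
      have : (0:ℝ) ≤ ∑ j ∈ Finset.range K, ‖x ^ j‖ / ε ^ j :=
        Finset.sum_nonneg fun i _ => by positivity
      linarith
    calc ‖x ^ j‖ ≤ ε ^ j := hbig j hj
      _ = 1 * ε ^ j := (one_mul _).symm
      _ ≤ _ := by gcongr
  · have hmem : j ∈ Finset.range K := Finset.mem_range.mpr hj
    have h1 : ‖x ^ j‖ / ε ^ j ≤ ∑ i ∈ Finset.range K, ‖x ^ i‖ / ε ^ i :=
      Finset.single_le_sum (f := fun i => ‖x ^ i‖ / ε ^ i) (fun i _ => by positivity) hmem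
    have h2 : ‖x ^ j‖ / ε ^ j ≤ 1 + ∑ i ∈ Finset.range K, ‖x ^ i‖ / ε ^ i := by linarith
    calc ‖x ^ j‖ = (‖x ^ j‖ / ε ^ j) * ε ^ j := by field_simp
      _ ≤ _ := by gcongr

lemma ann {c x : A} {M : ℝ}
    (hMb : ∀ j : ℕ, ‖c ^ j‖ ≤ M * (1/4) ^ j) (hM0 : 0 < M)
    (hx : x = x * c - c * x) : x = 0 := by
  set L : Module.End ℂ A := LinearMap.mulLeft ℂ c with hL
  set R : Module.End ℂ A := LinearMap.mulRight ℂ c with hR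
  set T : Module.End ℂ A := R + (-L) with hT
  have hT1 : T x = x := by
    simp only [hT, hR, hL, LinearMap.add_apply, LinearMap.neg_apply,
      LinearMap.mulRight_apply, LinearMap.mulLeft_apply]
    rw [← sub_eq_add_neg, ← hx]
  have hTk : ∀ k : ℕ, (T ^ k) x = x := by
    intro k; induction k with
    | zero => simp
    | succ k ih => rw [pow_succ, Module.End.mul_apply, hT1, ih]
  have hcomm : Commute R (-L) := ((LinearMap.commute_mulLeft_right c c).symm).neg_right
  have hnegL : ∀ (j : ℕ) (y : A), ‖((-L) ^ j) y‖ = ‖c ^ j * y‖ := by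
    intro j; induction j with
    | zero => intro y; simp
    | succ j ih =>
        intro y
        rw [pow_succ, Module.End.mul_apply]
        have h0 : (-L) y = -(c * y) := by simp [hL]
        rw [h0, map_neg, norm_neg, ih, ← mul_assoc, ← pow_succ]
  have hRp : ∀ (i : ℕ) (y : A), (R ^ i) y = y * c ^ i := by
    intro i y; rw [hR, LinearMap.pow_mulRight, LinearMap.mulRight_apply]
  have key : ∀ k : ℕ, ‖x‖ ≤ M^2 * (1/2) ^ k * ‖x‖ := by
    intro k
    have e1 : x = ∑ m ∈ antidiagonal k, (k.choose m.1) • ((R ^ m.1 * (-L) ^ m.2) x) := by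
      conv_lhs => rw [← hTk k]
      rw [hT, hcomm.add_pow']
      rw [LinearMap.sum_apply]
      refine Finset.sum_congr rfl fun m _ => ?_
      rw [LinearMap.smul_apply]
    have e2 : ‖x‖ ≤ ∑ m ∈ antidiagonal k, (k.choose m.1 : ℝ) * (M^2 * (1/4) ^ k * ‖x‖) := by
      conv_lhs => rw [e1]
      refine (norm_sum_le _ _).trans (Finset.sum_le_sum fun m hm => ?_)
      have hm' : m.1 + m.2 = k := Finset.HasAntidiagonal.mem_antidiagonal.mp hm
      have hb : ‖(R ^ m.1 * (-L) ^ m.2) x‖ ≤ M^2 * (1/4) ^ k * ‖x‖ := by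
        rw [Module.End.mul_apply, hRp]
        calc ‖((-L) ^ m.2) x * c ^ m.1‖ ≤ ‖((-L) ^ m.2) x‖ * ‖c ^ m.1‖ := norm_mul_le _ _
          _ = ‖c ^ m.2 * x‖ * ‖c ^ m.1‖ := by rw [hnegL]
          _ ≤ (‖c ^ m.2‖ * ‖x‖) * ‖c ^ m.1‖ :=
              mul_le_mul_of_nonneg_right (norm_mul_le _ _) (norm_nonneg _)
          _ ≤ M^2 * (1/4) ^ k * ‖x‖ := by
              rw [← hm', pow_add]
              nlinarith [mul_le_mul_of_nonneg_right
                  (mul_le_mul (hMb m.2) (hMb m.1) (norm_nonneg _)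
                    (by positivity : (0:ℝ) ≤ M * (1/4) ^ m.2)) (norm_nonneg x),
                norm_nonneg x, norm_nonneg (c ^ m.1), norm_nonneg (c ^ m.2)]
      calc ‖(k.choose m.1) • ((R ^ m.1 * (-L) ^ m.2) x)‖
          ≤ (k.choose m.1 : ℝ) * ‖(R ^ m.1 * (-L) ^ m.2) x‖ := norm_nsmul_le
        _ ≤ (k.choose m.1 : ℝ) * (M^2 * (1/4) ^ k * ‖x‖) :=
            mul_le_mul_of_nonneg_left hb (by positivity)
    have e3 : ∑ m ∈ antidiagonal k, (k.choose m.1 : ℝ) * (M^2 * (1/4) ^ k * ‖x‖)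
        = (2 : ℝ) ^ k * (M^2 * (1/4) ^ k * ‖x‖) := by
      rw [← Finset.sum_mul]
      congr 1
      have e : ∑ m ∈ antidiagonal k, (k.choose m.1 : ℝ)
          = ((∑ m ∈ antidiagonal k, k.choose m.1 : ℕ) : ℝ) := by
        rw [Nat.cast_sum]
      rw [e]
      have e' : ∑ m ∈ antidiagonal k, k.choose m.1 = ∑ i ∈ range (k+1), k.choose i := by
        rw [Nat.sum_antidiagonal_eq_sum_range_succ_mk]
      rw [e', Nat.sum_range_choose]
      push_cast; ring
    rw [e3] at e2
    have e4 : (2:ℝ)^k * (1/4:ℝ)^k = (1/2:ℝ)^k := by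
      rw [← mul_pow]; norm_num
    calc ‖x‖ ≤ (2:ℝ)^k * (M^2 * (1/4)^k * ‖x‖) := e2
      _ = M^2 * ((2:ℝ)^k * (1/4)^k) * ‖x‖ := by ring
      _ = M^2 * (1/2)^k * ‖x‖ := by rw [e4]
  by_contra hne
  have hxpos : 0 < ‖x‖ := norm_pos_iff.mpr hne
  obtain ⟨k, hk⟩ := exists_pow_lt_of_lt_one (show (0:ℝ) < 1/M^2 by positivity)
    (show (1:ℝ)/2 < 1 by norm_num)
  have hlt : M^2 * (1/2)^k < 1 := by
    have h5 : M^2 * (1/2)^k < M^2 * (1/M^2) := mul_lt_mul_of_pos_left hk (by positivity)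
    rwa [mul_one_div, div_self (by positivity : (M:ℝ)^2 ≠ 0)] at h5
  have h2 := key k
  nlinarith

end Aux

theorem stmt9 {A : Type*} [NormedRing A] [NormedAlgebra ℂ A] [CompleteSpace A]
    (a p : A) (hp : p * p = p) (hc : p * a = a * p)
    (h : ∃ n : ℕ, 0 < n ∧ inSqrtJ (a ^ n - p)) :
    ∃ b : A, IsGZhouInv a b := by
  rcases subsingleton_or_nontrivial A with hS | hN
  · refine ⟨0, ?_, fun y _ => by simp, 1, one_pos, 1, one_pos, fun y => ?_⟩
    · simp
    · exact isUnit_of_subsingleton _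
  obtain ⟨n, hn, m, hm, hw⟩ := h
  set w : A := a ^ n - p with hwdef
  -- basic commutation facts
  have cpa : Commute p a := hc
  have hya : ∀ y : A, y * a = a * y → Commute y a := fun y hy => hy
  have cpw : Commute p w := (cpa.pow_right n).sub_right (Commute.refl p)
  have caw : Commute a w := ((Commute.refl a).pow_right n).sub_right cpa.symm
  -- spectral facts
  have hσw : spectrum ℂ w ⊆ {0} := spec_sub_zero hm hw
  obtain ⟨M, hM0, hMb⟩ := norm_pow_bound hσw (show (0:ℝ) < 1/4 by norm_num)
  have hMb' : ∀ j : ℕ, ‖(-w) ^ j‖ ≤ M * (1/4) ^ j := by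
    intro j
    rcases Nat.even_or_odd j with he | ho
    · rw [he.neg_pow]; exact hMb j
    · rw [ho.neg_pow, norm_neg]; exact hMb j
  -- the key double-commutant property of p
  have key : ∀ y : A, y * a = a * y → y * p = p * y := by
    intro y hy
    have cya : Commute y a := hy
    have cany : Commute (a ^ n) y := (cya.pow_right n).symm
    have canp : Commute (a ^ n) p := (cpa.pow_right n).symm
    obtain ⟨z, hz0⟩ : ∃ z : A, z = p * y - p * y * p := ⟨_, rfl⟩
    obtain ⟨z', hz'0⟩ : ∃ z' : A, z' = y * p - p * y * p := ⟨_, rfl⟩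
    have h1 : z * p = 0 := by
      rw [hz0, sub_mul, mul_assoc (p * y) p p, hp, sub_self]
    have h2 : p * z = z := by
      simp only [hz0, mul_sub, ← mul_assoc, hp]
    have h1' : p * z' = 0 := by
      simp only [hz'0, mul_sub, ← mul_assoc, hp, sub_self]
    have h2' : z' * p = z' := by
      simp only [hz'0, sub_mul, mul_assoc, hp]
    have cz : Commute (a ^ n) z := by
      rw [hz0]
      exact (canp.mul_right cany).sub_right ((canp.mul_right cany).mul_right canp)
    have cz' : Commute (a ^ n) z' := by
      rw [hz'0]
      exact (cany.mul_right canp).sub_right ((canp.mul_right cany).mul_right canp)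
    have hz : z = z * w - w * z := by
      have : z * w - w * z = (z * (a^n) - z * p) - ((a^n) * z - p * z) := by
        rw [hwdef, mul_sub, sub_mul]
      rw [this, h1, h2, ← cz.eq]
      abel
    have hzz : z' = z' * (-w) - (-w) * z' := by
      have : z' * (-w) - (-w) * z' = ((a^n) * z' - p * z') - (z' * (a^n) - z' * p) := by
        rw [hwdef, mul_neg, neg_mul, sub_neg_eq_add, mul_sub, sub_mul]
        abel
      rw [this, h1', h2', cz'.eq]
      abel
    have hz0' : z = 0 := ann hMb hM0 hz
    have hzz0 : z' = 0 := ann hMb' hM0 hzz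
    rw [hz0] at hz0'
    rw [hz'0] at hzz0
    have e1 : p * y = p * y * p := sub_eq_zero.mp hz0'
    have e2 : y * p = p * y * p := sub_eq_zero.mp hzz0
    rw [e2, ← e1]
  -- invertibility of 1 + w * p
  have cwp : Commute w p := cpw.symm
  have hwpm : inRadJ ((w * p) ^ m) := by
    have hpow : (w * p) ^ m = w ^ m * p := by
      rw [cwp.mul_pow, idem_pow hp m hm]
    rw [hpow]
    intro y
    have h1 : IsUnit (1 - p * (y * w ^ m)) := by
      have := hw (p * y)
      rwa [← mul_assoc]
    have h2 := swap_unit h1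
    rwa [mul_assoc] at h2
  have hσwp : spectrum ℂ (w * p) ⊆ {0} := spec_sub_zero hm hwpm
  have hu : IsUnit (1 + w * p) := by
    have hnot : (-1 : ℂ) ∉ spectrum ℂ (w * p) := by
      intro hmem
      have := hσwp hmem
      simp at this
    have h1 := spectrum.notMem_iff.mp hnot
    rw [map_neg, map_one] at h1
    have h2 := h1.neg
    have : -((-1 : A) - w * p) = 1 + w * p := by abel
    rwa [this] at h2
  obtain ⟨s, hs1, hs2⟩ := isUnit_iff_exists.mp hu
  have inv_comm : ∀ t : A, t * (1 + w * p) = (1 + w * p) * t → t * s = s * t := by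
    intro t ht
    have e1 : s * ((1 + w * p) * t) * s = t * s := by
      rw [← mul_assoc s, hs2, one_mul]
    have e2 : s * (t * (1 + w * p)) * s = s * t := by
      rw [mul_assoc s, mul_assoc t, hs1, mul_one]
    rw [← e1, ← ht, e2]
  have cpwp : Commute p (w * p) := cpw.mul_right (Commute.refl p)
  have capw : Commute a (w * p) := caw.mul_right cpa.symm
  have cps : Commute p s := by
    have := inv_comm p (by
      rw [mul_add, add_mul, mul_one, one_mul, cpwp.eq])
    exact this
  have cas : Commute a s := by
    have := inv_comm a (by
      rw [mul_add, add_mul, mul_one, one_mul, capw.eq])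
    exact this
  -- the inverse b
  refine ⟨a ^ (n-1) * (p * s), ?_, ?_, n, hn, ?_⟩
  · -- b * a * b = b
    have hcore : a ^ n * (p * s) = p := by
      have han : a ^ n = w + p := by rw [hwdef]; abel
      have h1 : a ^ n * p = (1 + w * p) * p := by
        rw [han, add_mul, add_mul, one_mul, mul_assoc, hp]
        abel
      calc a ^ n * (p * s) = (a ^ n * p) * s := (mul_assoc _ _ _).symm
        _ = ((1 + w * p) * p) * s := by rw [h1]
        _ = (1 + w * p) * (s * p) := by rw [mul_assoc, cps.eq]
        _ = ((1 + w * p) * s) * p := (mul_assoc _ _ _).symm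
        _ = p := by rw [hs1, one_mul]
    have hba : (a ^ (n-1) * (p * s)) * a = p := by
      have cab : Commute a (p * s) := cpa.symm.mul_right cas
      rw [mul_assoc, ← cab.eq, ← mul_assoc, ← pow_succ, Nat.sub_add_cancel hn, hcore]
    rw [hba]
    have cpan : Commute p (a ^ (n-1)) := cpa.pow_right _
    calc p * (a ^ (n-1) * (p * s)) = (p * a ^ (n-1)) * (p * s) := (mul_assoc _ _ _).symm
      _ = a ^ (n-1) * (p * (p * s)) := by rw [cpan.eq, mul_assoc]
      _ = a ^ (n-1) * (p * s) := by rw [← mul_assoc p p s, hp]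
  · -- double commutant
    intro y hy
    have cya : Commute y a := hy
    have cyp : Commute y p := key y hy
    have cyw : Commute y w := (cya.pow_right n).sub_right cyp
    have cywp : Commute y (w * p) := cyw.mul_right cyp
    have cys : Commute y s := by
      have := inv_comm y (by
        rw [mul_add, add_mul, mul_one, one_mul, cywp.eq])
      exact this
    have cyb : Commute y (a ^ (n-1) * (p * s)) :=
      (cya.pow_right _).mul_right (cyp.mul_right cys)
    exact cyb.symm.eq
  · -- a ^ n - a * b ∈ √J
    have hab : a * (a ^ (n-1) * (p * s)) = p := by
      rw [← mul_assoc, ← pow_succ', Nat.sub_add_cancel hn]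
      -- now goal: a ^ n * (p * s) = p
      have han : a ^ n = w + p := by rw [hwdef]; abel
      have h1 : a ^ n * p = (1 + w * p) * p := by
        rw [han, add_mul, add_mul, one_mul, mul_assoc, hp]
        abel
      calc a ^ n * (p * s) = (a ^ n * p) * s := (mul_assoc _ _ _).symm
        _ = ((1 + w * p) * p) * s := by rw [h1]
        _ = (1 + w * p) * (s * p) := by rw [mul_assoc, cps.eq]
        _ = ((1 + w * p) * s) * p := (mul_assoc _ _ _).symm
        _ = p := by rw [hs1, one_mul]
    rw [hab]
    exact ⟨m, hm, hw⟩
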